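/- Let random variables m, c'_{[n]}, and a set A with |A|=z satisfy: (i) H(c'_{[n]} | m) ≤ z (the shares are a function of m and z q-ary keys), (ii) I(m; c'_A) = 0, and (iii) H(c'_A) = z. Then H(c'_{[n]∖A} | m, c'_A) = 0. -/
import Mathlib


open MeasureTheory ProbabilityTheory Real Finset
open scoped ENNReal

noncomputable section

/-- Shannon entropy (in nats) of a random variable with finite range. -/
def ent {Ω S : Type*} [MeasurableSpace Ω] [Fintype S] (μ : Measure Ω) (X : Ω → S) : ℝ :=
  ∑ s : S, Real.negMulLog ((μ (X ⁻¹' {s})).toReal)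

/-- Conditional Shannon entropy `H(X | Y)` (in nats). -/
def condEnt {Ω S T : Type*} [MeasurableSpace Ω] [Fintype S] [Fintype T]
    (μ : Measure Ω) (X : Ω → S) (Y : Ω → T) : ℝ :=
  ent μ (fun ω => (X ω, Y ω)) - ent μ Y

/-- Mutual information `I(X ; Y)` (in nats). -/
def mi {Ω S T : Type*} [MeasurableSpace Ω] [Fintype S] [Fintype T]
    (μ : Measure Ω) (X : Ω → S) (Y : Ω → T) : ℝ :=
  ent μ X + ent μ Y - ent μ (fun ω => (X ω, Y ω))

/-- Conditional mutual information `I(X ; Y | Z)` (in nats). -/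
def cmi {Ω S T V : Type*} [MeasurableSpace Ω] [Fintype S] [Fintype T] [Fintype V]
    (μ : Measure Ω) (X : Ω → S) (Y : Ω → T) (Z : Ω → V) : ℝ :=
  condEnt μ X Z + condEnt μ Y Z - condEnt μ (fun ω => (X ω, Y ω)) Z

lemma ent_comp_inj {Ω S T : Type*} [MeasurableSpace Ω] [Fintype S] [Fintype T]
    (μ : Measure Ω) (Y : Ω → T) (f : T → S) (hf : Function.Injective f) :
    ent μ (fun ω => f (Y ω)) = ent μ Y := by
  classical
  unfold ent
  rw [← Finset.sum_subset (Finset.subset_univ (Finset.univ.image f))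
      (fun s _ hs => by
        have : (fun ω => f (Y ω)) ⁻¹' {s} = ∅ := by
          ext ω
          simp only [Set.mem_preimage, Set.mem_singleton_iff, Set.mem_empty_iff_false,
            iff_false]
          intro h
          exact hs (h ▸ Finset.mem_image_of_mem f (Finset.mem_univ _))
        simp [this])]
  rw [Finset.sum_image (fun a _ b _ h => hf h)]
  congr 1
  funext t
  have : (fun ω => f (Y ω)) ⁻¹' {f t} = Y ⁻¹' {t} := by
    ext ω; simp [hf.eq_iff]
  rw [this]

lemma le_ent_pair {Ω S T : Type*} [MeasurableSpace Ω] [Fintype S] [Fintype T]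
    (μ : Measure Ω) [IsProbabilityMeasure μ] (X : Ω → S) (Y : Ω → T) :
    ent μ Y ≤ ent μ (fun ω => (X ω, Y ω)) := by
  unfold ent
  rw [Fintype.sum_prod_type, Finset.sum_comm]
  apply Finset.sum_le_sum
  intro t _
  set x : ℝ := (μ (Y ⁻¹' {t})).toReal with hx
  have hxs : ∀ s : S, (μ ((fun ω => (X ω, Y ω)) ⁻¹' {(s, t)})).toReal ≤ x := by
    intro s
    apply ENNReal.toReal_mono (measure_ne_top μ _)
    apply measure_mono
    intro ω hω
    simp only [Set.mem_preimage, Set.mem_singleton_iff] at hω ⊢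
    exact congrArg Prod.snd hω
  have hsum : x ≤ ∑ s : S, (μ ((fun ω => (X ω, Y ω)) ⁻¹' {(s, t)})).toReal := by
    have h1 : Y ⁻¹' {t} ⊆ ⋃ s : S, (fun ω => (X ω, Y ω)) ⁻¹' {(s, t)} := by
      intro ω hω
      exact Set.mem_iUnion.2 ⟨X ω, by simp_all⟩
    calc x ≤ (μ (⋃ s : S, (fun ω => (X ω, Y ω)) ⁻¹' {(s, t)})).toReal :=
          ENNReal.toReal_mono (measure_ne_top μ _) (measure_mono h1)
      _ ≤ (∑ s : S, μ ((fun ω => (X ω, Y ω)) ⁻¹' {(s, t)})).toReal :=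
          ENNReal.toReal_mono (by simp [ENNReal.sum_lt_top.2 fun s _ => (measure_lt_top μ _)] )
            (measure_iUnion_fintype_le μ _)
      _ = _ := ENNReal.toReal_sum (fun s _ => measure_ne_top μ _)
  have hx1 : x ≤ 1 := by
    rw [hx]; exact ENNReal.toReal_le_of_le_ofReal zero_le_one (by simpa using prob_le_one)
  have hx0 : 0 ≤ x := ENNReal.toReal_nonneg
  rcases eq_or_lt_of_le hx0 with h0 | h0
  · have : ∀ s : S, (μ ((fun ω => (X ω, Y ω)) ⁻¹' {(s, t)})).toReal = 0 := by
      intro s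
      exact le_antisymm (le_trans (hxs s) h0.symm.le) ENNReal.toReal_nonneg
    simp [← h0, this, Real.negMulLog_zero]
  · have key : Real.negMulLog x ≤ ∑ s : S, Real.negMulLog ((μ ((fun ω => (X ω, Y ω)) ⁻¹' {(s, t)})).toReal) := by
      have hlogx : (0:ℝ) ≤ -Real.log x := by
        have := Real.log_nonpos hx0 hx1
        linarith
      calc Real.negMulLog x = x * (-Real.log x) := by
            unfold Real.negMulLog; ring
        _ ≤ (∑ s : S, (μ ((fun ω => (X ω, Y ω)) ⁻¹' {(s, t)})).toReal) * (-Real.log x) :=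
            mul_le_mul_of_nonneg_right hsum hlogx
        _ = ∑ s : S, (μ ((fun ω => (X ω, Y ω)) ⁻¹' {(s, t)})).toReal * (-Real.log x) := by
            rw [Finset.sum_mul]
        _ ≤ ∑ s : S, Real.negMulLog ((μ ((fun ω => (X ω, Y ω)) ⁻¹' {(s, t)})).toReal) := by
            apply Finset.sum_le_sum
            intro s _
            set y := (μ ((fun ω => (X ω, Y ω)) ⁻¹' {(s, t)})).toReal with hy
            have hy0 : 0 ≤ y := ENNReal.toReal_nonneg
            rcases eq_or_lt_of_le hy0 with h0y | h0y
            · simp [← h0y, Real.negMulLog_zero]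
            · have : Real.log y ≤ Real.log x := Real.log_le_log h0y (hxs s)
              have : -Real.log x ≤ -Real.log y := by linarith
              calc y * (-Real.log x) ≤ y * (-Real.log y) :=
                    mul_le_mul_of_nonneg_left this hy0
                _ = Real.negMulLog y := by unfold Real.negMulLog; ring
    exact key

/-- Information-theoretic core of the security proof of the bandwidth-efficient
secure repair scheme: if the shares `c'_{[n]}` are a function of the message `m` and
`z` `q`-ary keys (so `H(c'_{[n]} | m) ≤ z·log q`), any `z` shares are independent of
the message, and `H(c'_A) = z·log q` for `|A| = z`, then given the message and the
shares in `A` all remaining shares are determined. -/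
theorem stmt6 {Ω F β : Type*} [MeasurableSpace Ω] [Fintype F] [Fintype β]
    (μ : Measure Ω) [IsProbabilityMeasure μ]
    {n z : ℕ} (M : Ω → β) (C : Ω → Fin n → F)
    (A : Finset (Fin n)) (hA : A.card = z)
    (h1 : condEnt μ C M ≤ z * Real.log (Fintype.card F))
    (h2 : mi μ M (fun ω (a : A) => C ω ↑a) = 0)
    (h3 : ent μ (fun ω (a : A) => C ω ↑a) = z * Real.log (Fintype.card F)) :
    condEnt μ (fun ω (b : ↥Aᶜ) => C ω ↑b)
      (fun ω => (M ω, fun a : A => C ω ↑a)) = 0 := by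
  classical
  -- The recombination map is injective.
  set g : (Fin n → F) × β → ((↥Aᶜ → F) × (β × (↥A → F))) :=
    fun p => ((fun b : ↥Aᶜ => p.1 ↑b), (p.2, fun a : ↥A => p.1 ↑a)) with hg
  have hginj : Function.Injective g := by
    rintro ⟨c, m⟩ ⟨c', m'⟩ h
    simp only [hg, Prod.mk.injEq] at h
    obtain ⟨h1', h2', h3'⟩ := h
    refine Prod.ext ?_ h2'
    funext i
    by_cases hi : i ∈ A
    · exact congrFun h3' ⟨i, hi⟩
    · exact congrFun h1' ⟨i, Finset.mem_compl.2 hi⟩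
  have e1 : ent μ (fun ω => ((fun b : ↥Aᶜ => C ω ↑b), (M ω, fun a : ↥A => C ω ↑a)))
      = ent μ (fun ω => (C ω, M ω)) :=
    ent_comp_inj μ (fun ω => (C ω, M ω)) g hginj
  have e2 : ent μ (fun ω => (M ω, fun a : ↥A => C ω ↑a))
      = ent μ M + z * Real.log (Fintype.card F) := by
    unfold mi at h2
    linarith [h2, h3]
  have hle : condEnt μ (fun ω (b : ↥Aᶜ) => C ω ↑b)
      (fun ω => (M ω, fun a : A => C ω ↑a)) ≤ 0 := by
    unfold condEnt at h1 ⊢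
    rw [e1, e2]
    linarith
  have hge : 0 ≤ condEnt μ (fun ω (b : ↥Aᶜ) => C ω ↑b)
      (fun ω => (M ω, fun a : A => C ω ↑a)) := by
    unfold condEnt
    have := le_ent_pair μ (fun ω (b : ↥Aᶜ) => C ω ↑b)
      (fun ω => (M ω, fun a : A => C ω ↑a))
    linarith
  linarith
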